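/- The polynomials r_n(q) = ∑_{h=0}^{n} q^{n-h} [n choose h]_q satisfy the recurrence r_n(q) = (1+q) r_{n-1}(q) + (q^n - q) r_{n-2}(q) for n ≥ 2, with r_0(q) = 1 and r_1(q) = 1 + q. -/

import Mathlib

/-!
Write `R n = ∑ₕ q^(n-h) [n choose h]_q` and `G n = ∑ₕ [n choose h]_q` (the Galois numbers).
The defining Pascal rule `[n+1, k+1] = [n, k] + q^(k+1) [n, k+1]` gives
`R (n+1) = R n + q^(n+1) G n`, and the dual rule `[n+1, k+1] = q^(n-k) [n, k] + [n, k+1]` gives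
`G (n+1) = R n + G n`. Eliminating `G` between these two first-order recurrences yields the
second-order recurrence for `R`.
-/

open Finset Polynomial

/-- The Gaussian (q-)binomial coefficient `[n choose k]_q` as a polynomial in `q`. -/
noncomputable def qbinom : ℕ → ℕ → Polynomial ℤ
  | _, 0 => 1
  | 0, _ + 1 => 0
  | n + 1, k + 1 => qbinom n k + Polynomial.X ^ (k + 1) * qbinom n (k + 1)

theorem qbinom_zero_right (n : ℕ) : qbinom n 0 = 1 := by
  cases n <;> rfl

theorem qbinom_succ_succ (n k : ℕ) :
    qbinom (n + 1) (k + 1) = qbinom n k + X ^ (k + 1) * qbinom n (k + 1) :=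
  rfl

theorem qbinom_of_lt : ∀ {n k : ℕ}, n < k → qbinom n k = 0
  | 0, _ + 1, _ => rfl
  | n + 1, k + 1, h => by
    rw [qbinom_succ_succ, qbinom_of_lt (by omega : n < k), qbinom_of_lt (by omega : n < k + 1)]
    ring

theorem qbinom_succ_succ' : ∀ n k : ℕ,
    qbinom (n + 1) (k + 1) = X ^ (n - k) * qbinom n k + qbinom n (k + 1)
  | 0, k => by simp [qbinom_succ_succ, qbinom_of_lt]
  | n + 1, 0 => by
    rw [Nat.sub_zero]
    linear_combination qbinom_succ_succ (n + 1) 0 + X * qbinom_succ_succ' n 0 -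
      qbinom_succ_succ n 0 + (1 - X ^ (n + 1)) * (qbinom_zero_right (n + 1) - qbinom_zero_right n)
  | n + 1, k + 1 => by
    -- The exponents agree when `k < n`; otherwise `[n, k+1]` vanishes.
    have hX : X ^ (k + 2) * X ^ (n - (k + 1)) * qbinom n (k + 1) =
        X ^ (n - k) * X ^ (k + 1) * qbinom n (k + 1) := by
      rcases lt_or_ge k n with hk | hk
      · rw [← pow_add, ← pow_add, show k + 2 + (n - (k + 1)) = n - k + (k + 1) by omega]
      · rw [qbinom_of_lt (by omega), mul_zero, mul_zero]
    rw [Nat.add_sub_add_right]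
    linear_combination qbinom_succ_succ (n + 1) (k + 1) + qbinom_succ_succ' n k +
      X ^ (k + 2) * qbinom_succ_succ' n (k + 1) - X ^ (n - k) * qbinom_succ_succ n k -
      qbinom_succ_succ n (k + 1) + hX

noncomputable def rPoly (n : ℕ) : ℤ[X] :=
  ∑ h ∈ range (n + 1), X ^ (n - h) * qbinom n h

noncomputable def galoisPoly (n : ℕ) : ℤ[X] :=
  ∑ h ∈ range (n + 1), qbinom n h

theorem sum_range_qbinom_succ (n : ℕ) :
    ∑ h ∈ range (n + 1), qbinom n (h + 1) = galoisPoly n - 1 := by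
  have h := sum_range_succ' (qbinom n) (n + 1)
  rw [sum_range_succ, qbinom_of_lt (Nat.lt_succ_self n), add_zero, qbinom_zero_right] at h
  rw [galoisPoly, h, add_sub_cancel_right]

theorem galoisPoly_succ (n : ℕ) : galoisPoly (n + 1) = rPoly n + galoisPoly n := by
  rw [galoisPoly, sum_range_succ', qbinom_zero_right]
  simp only [qbinom_succ_succ', sum_add_distrib, sum_range_qbinom_succ]
  rw [rPoly]
  ring

theorem rPoly_succ (n : ℕ) : rPoly (n + 1) = rPoly n + X ^ (n + 1) * galoisPoly n := by
  have hterm : ∀ h ∈ range (n + 1), X ^ (n + 1 - (h + 1)) * qbinom (n + 1) (h + 1) =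
      X ^ (n - h) * qbinom n h + X ^ (n + 1) * qbinom n (h + 1) := by
    intro h hh
    have : n - h + (h + 1) = n + 1 := by have := mem_range.mp hh; omega
    rw [qbinom_succ_succ, Nat.add_sub_add_right, mul_add, ← mul_assoc, ← pow_add, this]
  rw [rPoly, sum_range_succ', sum_congr rfl hterm, sum_add_distrib, ← mul_sum,
    sum_range_qbinom_succ, qbinom_zero_right, Nat.sub_zero, rPoly]
  ring

theorem rPoly_add_two (n : ℕ) :
    rPoly (n + 2) = (1 + X) * rPoly (n + 1) + (X ^ (n + 2) - X) * rPoly n := by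
  linear_combination rPoly_succ (n + 1) + X ^ (n + 2) * galoisPoly_succ n - X * rPoly_succ n

/-- The polynomials `r_n(q) = ∑_{h=0}^{n} q^{n-h} [n choose h]_q` satisfy
`r_n = (1+q) r_{n-1} + (q^n - q) r_{n-2}` for `n ≥ 2`, with `r_0 = 1`, `r_1 = 1 + q`. -/
theorem r_recurrence :
    (∑ h ∈ Finset.range 1, (Polynomial.X : Polynomial ℤ) ^ (0 - h) * qbinom 0 h) = 1 ∧
    (∑ h ∈ Finset.range 2, (Polynomial.X : Polynomial ℤ) ^ (1 - h) * qbinom 1 h) =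
      1 + Polynomial.X ∧
    ∀ n, 2 ≤ n →
      (∑ h ∈ Finset.range (n + 1), (Polynomial.X : Polynomial ℤ) ^ (n - h) * qbinom n h) =
        (1 + Polynomial.X) *
            (∑ h ∈ Finset.range n, (Polynomial.X : Polynomial ℤ) ^ (n - 1 - h) * qbinom (n - 1) h) +
          (Polynomial.X ^ n - Polynomial.X) *
            (∑ h ∈ Finset.range (n - 1),
              (Polynomial.X : Polynomial ℤ) ^ (n - 2 - h) * qbinom (n - 2) h) := by
  refine ⟨by simp [qbinom_zero_right], ?_, ?_⟩
  · simp [sum_range_succ, qbinom_zero_right, qbinom_succ_succ, qbinom_of_lt, add_comm]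
  · intro n hn
    obtain ⟨m, rfl⟩ : ∃ m, n = m + 2 := ⟨n - 2, by omega⟩
    exact rPoly_add_two m
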